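/- arXiv:2505.00869 — 7 statements merged into one kernel-verified Lean document; each statement's English description precedes it below -/
import Mathlib

section
/- Let A, B : Fin ℓ₁ × Fin ℓ₂ → Σ be two equal 2-dimensional arrays placed in a larger array at starting positions I₁ = (x₁,y₁) and I₂ = (x₂,y₂) with x₁ < x₂ (i.e., the larger array G satisfies G(x₁+a, y₁+b) = G(x₂+a, y₂+b) for all 0 ≤ a < ℓ₁, 0 ≤ b < ℓ₂). Then every entry G(x₂+a, y₂+b) of the copy at I₂ is determined by the entries of G outside the region {(x₂+a, y₂+b) : 0 ≤ a < ℓ₁, 0 ≤ b < ℓ₂} together with I₁ and I₂. Formally: if G and G' agree outside the I₂-region and both satisfy the self-repetition equation G(x₁+a, y₁+b) = G(x₂+a, y₂+b), then G = G'. -/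
/-- 2D recovery of an overlapping repeated sub-array.  If `G` and `G'`
agree outside the box at `I₂ = (x₂,y₂)` and both satisfy the self-repetition
equation `G(x₁+a, y₁+b) = G(x₂+a, y₂+b)` (with `x₁ < x₂`), then `G = G'`. -/
theorem stmt_5 (n ℓ₁ ℓ₂ x₁ y₁ x₂ y₂ : ℕ)
    (h₁x : x₁ + ℓ₁ ≤ n) (h₁y : y₁ + ℓ₂ ≤ n) (h₂x : x₂ + ℓ₁ ≤ n) (h₂y : y₂ + ℓ₂ ≤ n)
    (hx : x₁ < x₂)
    (G G' : Fin n × Fin n → Bool)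
    (hG : ∀ a b (ha : a < ℓ₁) (hb : b < ℓ₂),
      G (⟨x₁ + a, by omega⟩, ⟨y₁ + b, by omega⟩) = G (⟨x₂ + a, by omega⟩, ⟨y₂ + b, by omega⟩))
    (hG' : ∀ a b (ha : a < ℓ₁) (hb : b < ℓ₂),
      G' (⟨x₁ + a, by omega⟩, ⟨y₁ + b, by omega⟩) = G' (⟨x₂ + a, by omega⟩, ⟨y₂ + b, by omega⟩))
    (hout : ∀ p : Fin n × Fin n,
      (¬ ∃ a b, a < ℓ₁ ∧ b < ℓ₂ ∧ (p.1 : ℕ) = x₂ + a ∧ (p.2 : ℕ) = y₂ + b) → G p = G' p) :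
    G = G' := by
  have key : ∀ a, ∀ b (ha : a < ℓ₁) (hb : b < ℓ₂),
      G (⟨x₂ + a, by omega⟩, ⟨y₂ + b, by omega⟩) = G' (⟨x₂ + a, by omega⟩, ⟨y₂ + b, by omega⟩) := by
    intro a
    induction a using Nat.strong_induction_on with
    | _ a ih =>
      intro b ha hb
      rw [← hG a b ha hb, ← hG' a b ha hb]
      by_cases hin : ∃ a' b', a' < ℓ₁ ∧ b' < ℓ₂ ∧ x₁ + a = x₂ + a' ∧ y₁ + b = y₂ + b'
      · obtain ⟨a', b', ha', hb', hea, heb⟩ := hin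
        have h1 : (⟨x₁ + a, by omega⟩ : Fin n) = ⟨x₂ + a', by omega⟩ := by
          apply Fin.ext; simpa using hea
        have h2 : (⟨y₁ + b, by omega⟩ : Fin n) = ⟨y₂ + b', by omega⟩ := by
          apply Fin.ext; simpa using heb
        rw [h1, h2]
        exact ih a' (by omega) b' ha' hb'
      · exact hout _ (by simpa using hin)
  funext p
  by_cases hin : ∃ a b, a < ℓ₁ ∧ b < ℓ₂ ∧ (p.1 : ℕ) = x₂ + a ∧ (p.2 : ℕ) = y₂ + b
  · obtain ⟨a, b, ha, hb, hea, heb⟩ := hin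
    have hp : p = (⟨x₂ + a, by omega⟩, ⟨y₂ + b, by omega⟩) := by
      apply Prod.ext <;> apply Fin.ext <;> simpa
    rw [hp]; exact key a b ha hb
  · exact hout p hin
end

section
/- Let s, t : Fin n → Σ be strings (the d = 1 case) and suppose s contains two identical overlapping substrings of length ℓ starting at positions i₁ < i₂ with i₂ < i₁ + ℓ ≤ n and i₂ + ℓ ≤ n, i.e., s(i₁ + a) = s(i₂ + a) for all 0 ≤ a < ℓ. Then s restricted to positions outside [i₂, i₂+ℓ) together with i₁ and i₂ uniquely determines s: if t agrees with s outside [i₂, i₂+ℓ) and t(i₁+a) = t(i₂+a) for all 0 ≤ a < ℓ, then t = s. -/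
/-- 1D recovery of an overlapping repeated substring.  If `s` contains
two identical overlapping substrings of length `ℓ` starting at `i₁ < i₂`, and `t`
agrees with `s` outside `[i₂, i₂+ℓ)` and satisfies the same self-repetition
equation, then `t = s`. -/
theorem stmt_6 (n ℓ i₁ i₂ : ℕ) (h₁₂ : i₁ < i₂) (hov : i₂ < i₁ + ℓ)
    (h₁ : i₁ + ℓ ≤ n) (h₂ : i₂ + ℓ ≤ n)
    (s t : Fin n → Bool)
    (hs : ∀ a (ha : a < ℓ), s ⟨i₁ + a, by omega⟩ = s ⟨i₂ + a, by omega⟩)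
    (ht : ∀ a (ha : a < ℓ), t ⟨i₁ + a, by omega⟩ = t ⟨i₂ + a, by omega⟩)
    (hout : ∀ k : Fin n, ((k : ℕ) < i₂ ∨ i₂ + ℓ ≤ (k : ℕ)) → t k = s k) :
    t = s := by
  have key : ∀ a, ∀ (ha : a < ℓ), t ⟨i₂ + a, by omega⟩ = s ⟨i₂ + a, by omega⟩ := by
    intro a
    induction a using Nat.strong_induction_on with
    | _ a ih =>
      intro ha
      rw [← ht a ha, ← hs a ha]
      by_cases hlt : i₁ + a < i₂
      · exact hout _ (Or.inl hlt)
      · have he : (⟨i₁ + a, by omega⟩ : Fin n) = ⟨i₂ + (a - (i₂ - i₁)), by omega⟩ :=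
          Fin.ext (by simp; omega)
        rw [he]
        exact ih (a - (i₂ - i₁)) (by omega) (by omega)
  funext k
  by_cases hk : (k : ℕ) < i₂ ∨ i₂ + ℓ ≤ (k : ℕ)
  · exact hout k hk
  · have he : k = (⟨i₂ + ((k : ℕ) - i₂), by omega⟩ : Fin n) := Fin.ext (by simp; omega)
    rw [he]
    exact key ((k : ℕ) - i₂) (by omega)
end

section
/- Define the repeat-free set C_RF(n,d,𝐝) of arrays A : (Fin n)^d → Σ such that for all valid starting positions I₁ ≠ I₂, the sub-arrays of size 𝐝 = (ℓ₁,…,ℓ_d) at I₁ and I₂ differ. Then the map sending an invalid array A ∉ C_RF(n,d,𝐝) to the triple (R(A, I₂, 𝐝), I₁, I₂) — where (I₁, I₂) is the lexicographically first pair of distinct positions with equal sub-arrays and R(A, I₂, 𝐝) is A with the sub-array at I₂ erased — is injective. -/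
/-- Binary `d`-dimensional arrays of size `n^d`. -/
abbrev Arr (n d : ℕ) := (Fin d → Fin n) → Bool

/-- Extension of an array to arbitrary natural indices (`false` off the grid). -/
def extA (n d : ℕ) (A : Arr n d) (J : Fin d → ℕ) : Bool :=
  if h : ∀ j, J j < n then A (fun j => ⟨J j, h j⟩) else false

/-- A starting position `I` is valid for sub-array size `ℓ`. -/
def validPos (n d : ℕ) (ℓ I : Fin d → ℕ) : Prop := ∀ j, I j + ℓ j ≤ n

/-- The size-`ℓ` sub-arrays of `A` at `I₁` and `I₂` coincide. -/
def subEq (n d : ℕ) (ℓ : Fin d → ℕ) (A : Arr n d) (I₁ I₂ : Fin d → ℕ) : Prop :=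
  ∀ a : Fin d → ℕ, (∀ j, a j < ℓ j) →
    extA n d A (fun j => I₁ j + a j) = extA n d A (fun j => I₂ j + a j)

/-- The repeat-free constraint `C_RF(n,d,𝐝)`. -/
def CRF (n d : ℕ) (ℓ : Fin d → ℕ) : Set (Arr n d) :=
  {A | ∀ I₁ I₂, validPos n d ℓ I₁ → validPos n d ℓ I₂ → I₁ ≠ I₂ → ¬ subEq n d ℓ A I₁ I₂}

/-- `R(A, I, 𝐝)`: the array `A` with the size-`ℓ` box at `I` erased. -/
def eraseBox (n d : ℕ) (ℓ : Fin d → ℕ) (A : Arr n d) (I : Fin d → ℕ) :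
    (Fin d → Fin n) → Option Bool :=
  fun J => if ∀ j, I j ≤ (J j : ℕ) ∧ (J j : ℕ) < I j + ℓ j then none else some (A J)

/-- the map sending an invalid array `A ∉ C_RF(n,d,𝐝)` to
`(R(A, I₂, 𝐝), I₁, I₂)`, where `(I₁, I₂)` is a chosen (e.g. lexicographically
first) pair of distinct valid positions with equal sub-arrays, is injective
on the set of invalid arrays. -/
theorem stmt_7 (n d : ℕ) (ℓ : Fin d → ℕ)
    (pick : Arr n d → ((Fin d → ℕ) × (Fin d → ℕ)))
    (hpick : ∀ A ∉ CRF n d ℓ,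
      validPos n d ℓ (pick A).1 ∧ validPos n d ℓ (pick A).2 ∧
      (pick A).1 ≠ (pick A).2 ∧ subEq n d ℓ A (pick A).1 (pick A).2) :
    Set.InjOn (fun A => (eraseBox n d ℓ A (pick A).2, (pick A).1, (pick A).2))
      {A | A ∉ CRF n d ℓ} := by
  classical
  intro A hA B hB hEq
  simp only [Prod.mk.injEq] at hEq
  obtain ⟨hE, h1, h2⟩ := hEq
  obtain ⟨vA1, vA2, neA, sA⟩ := hpick A hA
  obtain ⟨_, _, _, sB⟩ := hpick B hB
  rw [← h1, ← h2] at sB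
  rw [← h2] at hE
  set I₁ := (pick A).1 with hI1
  set I₂ := (pick A).2 with hI2
  have hout : ∀ J : Fin d → Fin n,
      ¬(∀ j, I₂ j ≤ (J j : ℕ) ∧ (J j : ℕ) < I₂ j + ℓ j) → A J = B J := by
    intro J hJ
    have h := congrFun hE J
    simp only [eraseBox, if_neg hJ, Option.some.injEq] at h
    exact h
  obtain ⟨j₀, hj₀⟩ := Function.ne_iff.mp neA
  let μ : (Fin d → Fin n) → ℕ := fun J => if I₁ j₀ < I₂ j₀ then (J j₀ : ℕ) else n - J j₀
  have key : ∀ k, ∀ J : Fin d → Fin n, μ J < k → A J = B J := by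
    intro k
    induction k with
    | zero => intro J h; omega
    | succ k ih =>
      intro J hJ
      by_cases hbox : ∀ j, I₂ j ≤ (J j : ℕ) ∧ (J j : ℕ) < I₂ j + ℓ j
      · set a : Fin d → ℕ := fun j => (J j : ℕ) - I₂ j with ha_def
        have ha : ∀ j, a j < ℓ j := by
          intro j; have := hbox j; simp only [ha_def]; omega
        have h2n : ∀ j, I₂ j + a j < n := by
          intro j; have := (J j).isLt; have := hbox j; simp only [ha_def]; omega
        have h1n : ∀ j, I₁ j + a j < n := fun j =>
          lt_of_lt_of_le (Nat.add_lt_add_left (ha j) _) (vA1 j)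
        set J' : Fin d → Fin n := fun j => ⟨I₁ j + a j, h1n j⟩ with hJ'
        have hcoord : ∀ j, I₂ j + a j = (J j : ℕ) := by
          intro j; have := hbox j; simp only [ha_def]; omega
        have e2 : ∀ C : Arr n d, extA n d C (fun j => I₂ j + a j) = C J := by
          intro C
          unfold extA
          rw [dif_pos h2n]
          congr 1
          funext j
          exact Fin.ext (hcoord j)
        have e1 : ∀ C : Arr n d, extA n d C (fun j => I₁ j + a j) = C J' := by
          intro C
          unfold extA
          rw [dif_pos h1n]
        have hμ : μ J' < μ J := by
          have hb0 := hbox j₀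
          have hc0 := hcoord j₀
          have hn0 := h1n j₀
          rcases lt_or_gt_of_ne hj₀ with h | h
          · simp only [μ, hJ', if_pos h]
            omega
          · simp only [μ, hJ', if_neg (not_lt.mpr (le_of_lt h))]
            omega
        have hAB' : A J' = B J' := ih J' (by omega)
        calc A J = extA n d A (fun j => I₂ j + a j) := (e2 A).symm
          _ = extA n d A (fun j => I₁ j + a j) := (sA a ha).symm
          _ = A J' := e1 A
          _ = B J' := hAB'
          _ = extA n d B (fun j => I₁ j + a j) := (e1 B).symm
          _ = extA n d B (fun j => I₂ j + a j) := sB a ha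
          _ = B J := e2 B
      · exact hout J hbox
  funext J
  exact key (μ J + 1) J (Nat.lt_succ_self _)
end

section
/- Let n, d ≥ 1 and let 𝐝 = (ℓ₁,…,ℓ_d) with ℓⱼ ≤ n and ℓ₁·⋯·ℓ_d ≥ ⌈d·log₂ n⌉ + 1. Then |C_ZRCF(n,d,𝐝)| ≥ 2^{n^d − 1}, where C_ZRCF(n,d,𝐝) is the set of arrays in Σ^{(Fin n)^d} containing no all-zero sub-array of size 𝐝. -/
open Finset

/-- The size-`ℓ` sub-array of `A` at `I` is all-zero. -/
def allZeroBox (n d : ℕ) (ℓ : Fin d → ℕ) (A : Arr n d) (I : Fin d → ℕ) : Prop :=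
  ∀ a : Fin d → ℕ, (∀ j, a j < ℓ j) → extA n d A (fun j => I j + a j) = false

/-- The zero-rectangular-cuboid-free constraint `C_ZRCF(n,d,𝐝)`. -/
def CZRCF (n d : ℕ) (ℓ : Fin d → ℕ) : Set (Arr n d) :=
  {A | ∀ I, validPos n d ℓ I → ¬ allZeroBox n d ℓ A I}

/-- `p` lies in the box of size `ℓ` at position `I`. -/
def inBox (n d : ℕ) (ℓ : Fin d → ℕ) (I p : Fin d → Fin n) : Prop :=
  ∀ j, (I j : ℕ) ≤ p j ∧ (p j : ℕ) < I j + ℓ j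

instance (n d : ℕ) (ℓ : Fin d → ℕ) (I : Fin d → Fin n) :
    DecidablePred (inBox n d ℓ I) := fun _ => by unfold inBox; infer_instance

lemma card_inBox (n d : ℕ) (ℓ : Fin d → ℕ) (I : Fin d → Fin n)
    (hv : ∀ j, (I j : ℕ) + ℓ j ≤ n) :
    Fintype.card {p : Fin d → Fin n // inBox n d ℓ I p} = ∏ j, ℓ j := by
  have e : {p : Fin d → Fin n // inBox n d ℓ I p} ≃ ((j : Fin d) → Fin (ℓ j)) :=
    { toFun := fun p j => ⟨(p.1 j : ℕ) - I j, by have := p.2 j; omega⟩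
      invFun := fun a =>
        ⟨fun j => ⟨(I j : ℕ) + a j, by have := (a j).isLt; have := hv j; omega⟩,
          fun j => by simpa using (a j).isLt⟩
      left_inv := fun p => Subtype.ext (funext fun j => Fin.ext (by
        have := p.2 j; simp; omega))
      right_inv := fun a => funext fun j => Fin.ext (by simp) }
  rw [Fintype.card_congr e, Fintype.card_pi]
  simp

lemma exists_box (n d : ℕ) (ℓ : Fin d → ℕ) (hℓ1 : ∀ j, 1 ≤ ℓ j) (A : Arr n d)
    (hA : A ∉ CZRCF n d ℓ) :
    ∃ I : {I : Fin d → Fin n // ∀ j, (I j : ℕ) + ℓ j ≤ n},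
      ∀ p, inBox n d ℓ I.1 p → A p = false := by
  simp only [CZRCF, Set.mem_setOf_eq] at hA
  push_neg at hA
  obtain ⟨I, hv, hz⟩ := hA
  refine ⟨⟨fun j => ⟨I j, by have := hv j; have := hℓ1 j; omega⟩, fun j => hv j⟩, ?_⟩
  intro p hp
  have hstep := hz (fun j => (p j : ℕ) - I j) (fun j => by show (p j : ℕ) - (I j : ℕ) < ℓ j; have := hp j; simp at this; omega)
  have hfun : (fun j => I j + ((p j : ℕ) - I j)) = fun j => (p j : ℕ) := by
    funext j; have := hp j; simp at this; omega
  rw [hfun] at hstep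
  unfold extA at hstep
  rw [dif_pos (fun j => (p j).isLt)] at hstep
  have : (fun j => (⟨(p j : ℕ), (p j).isLt⟩ : Fin n)) = p := funext fun j => Fin.ext rfl
  rwa [this] at hstep

/-- Pick a valid position whose box is all zero in `A`. -/
noncomputable def pickI (n d : ℕ) (ℓ : Fin d → ℕ) (hℓ1 : ∀ j, 1 ≤ ℓ j) (A : Arr n d)
    (hA : A ∉ CZRCF n d ℓ) : {I : Fin d → Fin n // ∀ j, (I j : ℕ) + ℓ j ≤ n} :=
  (exists_box n d ℓ hℓ1 A hA).choose

lemma pickI_spec (n d : ℕ) (ℓ : Fin d → ℕ) (hℓ1 : ∀ j, 1 ≤ ℓ j) (A : Arr n d)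
    (hA : A ∉ CZRCF n d ℓ) :
    ∀ p, inBox n d ℓ (pickI n d ℓ hℓ1 A hA).1 p → A p = false :=
  (exists_box n d ℓ hℓ1 A hA).choose_spec

/-- if `ℓ₁⋯ℓ_d ≥ ⌈d·log₂ n⌉ + 1` then `|C_ZRCF(n,d,𝐝)| ≥ 2^{n^d − 1}`. -/
theorem stmt_9 (n d : ℕ) (hn : 1 ≤ n) (hd : 1 ≤ d) (ℓ : Fin d → ℕ)
    (hℓ : ∀ j, 1 ≤ ℓ j ∧ ℓ j ≤ n)
    (h : ⌈(d : ℝ) * Real.logb 2 n⌉₊ + 1 ≤ ∏ j, ℓ j) :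
    2 ^ (n ^ d - 1) ≤ Nat.card ↥(CZRCF n d ℓ) := by
  classical
  set N := n ^ d with hN
  set L := ∏ j, ℓ j with hL
  set K := ⌈(d : ℝ) * Real.logb 2 n⌉₊ with hKdef
  have hℓ1 : ∀ j, 1 ≤ ℓ j := fun j => (hℓ j).1
  have hLN : L ≤ N := by
    calc L ≤ ∏ _j : Fin d, n := Finset.prod_le_prod (fun j _ => Nat.zero_le _)
            (fun j _ => (hℓ j).2)
    _ = n ^ d := by simp
  have hN1 : 1 ≤ N := Nat.one_le_pow _ _ hn
  have hL1 : K + 1 ≤ L := h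
  -- Step B : N ≤ 2^K
  have hB : N ≤ 2 ^ K := by
    have hx : (0 : ℝ) < (n : ℝ) ^ d := by positivity
    have hlog : Real.logb 2 ((n : ℝ) ^ d) = (d : ℝ) * Real.logb 2 (n : ℝ) :=
      Real.logb_pow 2 (n : ℝ) d
    have hrp := Real.rpow_logb (by norm_num : (0:ℝ) < 2) (by norm_num : (2:ℝ) ≠ 1) hx
    have hreal : ((n : ℝ)) ^ d ≤ (2 : ℝ) ^ (K : ℕ) := by
      calc ((n : ℝ)) ^ d = (2 : ℝ) ^ (Real.logb 2 ((n : ℝ) ^ d)) := hrp.symm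
        _ ≤ (2 : ℝ) ^ ((K : ℕ) : ℝ) := by
            apply Real.rpow_le_rpow_of_exponent_le one_le_two
            rw [hlog, hKdef]
            exact Nat.le_ceil _
        _ = (2 : ℝ) ^ (K : ℕ) := Real.rpow_natCast 2 K
    have : ((N : ℕ) : ℝ) ≤ ((2 ^ K : ℕ) : ℝ) := by rw [hN]; push_cast; exact hreal
    exact_mod_cast this
  -- Cardinality of the complement of a box
  have hcard : ∀ I : {I : Fin d → Fin n // ∀ j, (I j : ℕ) + ℓ j ≤ n},
      Fintype.card {p : Fin d → Fin n // ¬ inBox n d ℓ I.1 p} = N - L := by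
    intro I
    rw [Fintype.card_subtype_compl, card_inBox n d ℓ I.1 I.2]
    congr 1
    simp [hN]
  let e : ∀ I : {I : Fin d → Fin n // ∀ j, (I j : ℕ) + ℓ j ≤ n},
      {p : Fin d → Fin n // ¬ inBox n d ℓ I.1 p} ≃ Fin (N - L) :=
    fun I => Fintype.equivFinOfCardEq (hcard I)
  -- the injection from the complement
  let g : ↥(CZRCF n d ℓ)ᶜ →
      ({I : Fin d → Fin n // ∀ j, (I j : ℕ) + ℓ j ≤ n} × (Fin (N - L) → Bool)) :=
    fun A => ⟨pickI n d ℓ hℓ1 A.1 A.2,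
      fun k => A.1 ((e (pickI n d ℓ hℓ1 A.1 A.2)).symm k).1⟩
  have hginj : Function.Injective g := by
    intro A B hg
    have h1 : pickI n d ℓ hℓ1 A.1 A.2 = pickI n d ℓ hℓ1 B.1 B.2 :=
      congrArg Prod.fst hg
    have h2 := congrArg Prod.snd hg
    simp only [g] at h2
    rw [← h1] at h2
    apply Subtype.ext
    funext p
    by_cases hp : inBox n d ℓ (pickI n d ℓ hℓ1 A.1 A.2).1 p
    · rw [pickI_spec n d ℓ hℓ1 A.1 A.2 p hp]
      rw [pickI_spec n d ℓ hℓ1 B.1 B.2 p (h1 ▸ hp)]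
    · have h3 := congrFun h2 ((e (pickI n d ℓ hℓ1 A.1 A.2)) ⟨p, hp⟩)
      simpa using h3
  -- bound the complement
  have hcompl : Nat.card ↥(CZRCF n d ℓ)ᶜ ≤ N * 2 ^ (N - L) := by
    calc Nat.card ↥(CZRCF n d ℓ)ᶜ
        ≤ Nat.card ({I : Fin d → Fin n // ∀ j, (I j : ℕ) + ℓ j ≤ n} ×
            (Fin (N - L) → Bool)) := Nat.card_le_card_of_injective g hginj
      _ = Fintype.card {I : Fin d → Fin n // ∀ j, (I j : ℕ) + ℓ j ≤ n} * 2 ^ (N - L) := by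
          rw [Nat.card_eq_fintype_card, Fintype.card_prod, Fintype.card_fun]
          simp
      _ ≤ N * 2 ^ (N - L) := by
          apply Nat.mul_le_mul_right
          calc Fintype.card {I : Fin d → Fin n // ∀ j, (I j : ℕ) + ℓ j ≤ n}
              ≤ Fintype.card (Fin d → Fin n) := Fintype.card_subtype_le _
            _ = N := by simp [hN]
  have hcompl2 : Nat.card ↥(CZRCF n d ℓ)ᶜ ≤ 2 ^ (N - 1) := by
    calc Nat.card ↥(CZRCF n d ℓ)ᶜ ≤ N * 2 ^ (N - L) := hcompl
      _ ≤ 2 ^ K * 2 ^ (N - L) := Nat.mul_le_mul_right _ hB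
      _ = 2 ^ (K + (N - L)) := (pow_add 2 K (N - L)).symm
      _ ≤ 2 ^ (N - 1) := Nat.pow_le_pow_right (by norm_num) (by omega)
  -- total count
  have htot : Nat.card ↥(CZRCF n d ℓ) + Nat.card ↥(CZRCF n d ℓ)ᶜ = 2 ^ N := by
    rw [Nat.card_coe_set_eq, Nat.card_coe_set_eq,
      Set.ncard_add_ncard_compl (CZRCF n d ℓ)]
    rw [Nat.card_eq_fintype_card, Fintype.card_fun]
    simp [hN]
  have hpow : 2 ^ (N - 1) + 2 ^ (N - 1) = 2 ^ N := by
    rw [← two_mul, ← pow_succ']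
    congr 1
    omega
  omega
end

section
/- Let n, d ≥ 1 and 𝐝 = (ℓ₁,…,ℓ_d) with ℓⱼ ≤ n and ℓ₁·⋯·ℓ_d ≥ 2·⌈d·log₂ n⌉ + 1. Then the number of arrays in Σ^{(Fin n)^d} containing two identical sub-arrays of size 𝐝 at distinct positions is at most 2^{n^d − 1}; equivalently, |C_RF(n,d,𝐝)| ≥ 2^{n^d} − 2^{n^d − 1} = 2^{n^d − 1}. -/
open Finset

lemma key_inj (n d : ℕ) (ℓ : Fin d → ℕ)
    (q₁ q₂ : Fin d → Fin n) (j₀ : Fin d) (hj₀ : (q₁ j₀ : ℕ) < q₂ j₀)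
    (h₁ : validPos n d ℓ (fun j => (q₁ j : ℕ)))
    (A B : Arr n d)
    (hA : subEq n d ℓ A (fun j => (q₁ j : ℕ)) (fun j => (q₂ j : ℕ)))
    (hB : subEq n d ℓ B (fun j => (q₁ j : ℕ)) (fun j => (q₂ j : ℕ)))
    (hout : ∀ x : Fin d → Fin n,
      ¬ (∀ j, (q₂ j : ℕ) ≤ x j ∧ (x j : ℕ) < (q₂ j : ℕ) + ℓ j) → A x = B x) :
    A = B := by
  have key : ∀ m, ∀ x : Fin d → Fin n, (x j₀ : ℕ) < m → A x = B x := by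
    intro m
    induction m with
    | zero => exact fun x hx => absurd hx (Nat.not_lt_zero _)
    | succ m ih =>
      intro x hx
      by_cases hb : ∀ j, (q₂ j : ℕ) ≤ x j ∧ (x j : ℕ) < (q₂ j : ℕ) + ℓ j
      · set a : Fin d → ℕ := fun j => (x j : ℕ) - (q₂ j : ℕ) with ha
        have haℓ : ∀ j, a j < ℓ j := by
          intro j; have h1 := hb j; simp only [ha]; omega
        have hy : ∀ j, (q₁ j : ℕ) + a j < n := by
          intro j; have h1 : (q₁ j : ℕ) + ℓ j ≤ n := h₁ j; have h2 := haℓ j; omega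
        have hx2 : ∀ j, (q₂ j : ℕ) + a j < n := by
          intro j; have h1 := (x j).isLt; have h2 := hb j; simp only [ha]; omega
        have hxeq : (fun j => (⟨(q₂ j : ℕ) + a j, hx2 j⟩ : Fin n)) = x := by
          funext j; have h1 := hb j; apply Fin.ext; simp only [ha]; omega
        have e1 : extA n d A (fun j => (q₁ j : ℕ) + a j)
            = A (fun j => ⟨(q₁ j : ℕ) + a j, hy j⟩) := dif_pos hy
        have e2 : extA n d A (fun j => (q₂ j : ℕ) + a j) = A x := by
          rw [← hxeq]; exact dif_pos hx2
        have e1' : extA n d B (fun j => (q₁ j : ℕ) + a j)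
            = B (fun j => ⟨(q₁ j : ℕ) + a j, hy j⟩) := dif_pos hy
        have e2' : extA n d B (fun j => (q₂ j : ℕ) + a j) = B x := by
          rw [← hxeq]; exact dif_pos hx2
        have hstep := ih (fun j => (⟨(q₁ j : ℕ) + a j, hy j⟩ : Fin n))
          (by have h1 := hb j₀; simp only [ha]; omega)
        have hAx : A x = A (fun j => ⟨(q₁ j : ℕ) + a j, hy j⟩) := by
          rw [← e2, ← hA a haℓ, e1]
        have hBx : B x = B (fun j => ⟨(q₁ j : ℕ) + a j, hy j⟩) := by
          rw [← e2', ← hB a haℓ, e1']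
        rw [hAx, hBx]; exact hstep
      · exact hout x hb
  funext x
  exact key ((x j₀ : ℕ) + 1) x (Nat.lt_succ_self _)

lemma card_filter_interval (n a b : ℕ) (h : a + b ≤ n) :
    ((univ : Finset (Fin n)).filter (fun v : Fin n => a ≤ (v : ℕ) ∧ (v : ℕ) < a + b)).card = b := by
  have heq : (univ : Finset (Fin n)).filter (fun v : Fin n => a ≤ (v : ℕ) ∧ (v : ℕ) < a + b)
      = (Finset.Ico a (a + b)).attachFin (fun m hm => by
          rw [Finset.mem_Ico] at hm; omega) := by
    ext v; simp [Finset.mem_attachFin, Finset.mem_Ico]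
  rw [heq, Finset.card_attachFin, Nat.card_Ico]
  omega

/-- if `ℓ₁⋯ℓ_d ≥ 2·⌈d·log₂ n⌉ + 1` then the number of arrays with
two identical size-`𝐝` sub-arrays at distinct valid positions is at most
`2^{n^d − 1}`; equivalently `|C_RF(n,d,𝐝)| ≥ 2^{n^d − 1}`. -/
theorem stmt_10 (n d : ℕ) (hn : 1 ≤ n) (hd : 1 ≤ d) (ℓ : Fin d → ℕ)
    (hℓ : ∀ j, 1 ≤ ℓ j ∧ ℓ j ≤ n)
    (h : 2 * ⌈(d : ℝ) * Real.logb 2 n⌉₊ + 1 ≤ ∏ j, ℓ j) :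
    Nat.card ↥((CRF n d ℓ)ᶜ) ≤ 2 ^ (n ^ d - 1) ∧
      2 ^ (n ^ d - 1) ≤ Nat.card ↥(CRF n d ℓ) := by
  classical
  set N := n ^ d with hNdef
  set L := ∏ j, ℓ j with hLdef
  set K := ⌈(d : ℝ) * Real.logb 2 n⌉₊ with hKdef
  have hNpos : 1 ≤ N := Nat.one_le_pow d n hn
  have hLN : L ≤ N := by
    rw [hLdef, hNdef]
    calc ∏ j, ℓ j ≤ ∏ _j : Fin d, n := Finset.prod_le_prod' (fun j _ => (hℓ j).2)
      _ = n ^ d := by simp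
  -- N ≤ 2 ^ K
  have hNK : N ≤ 2 ^ K := by
    have hcast : ((n : ℝ)) ^ d ≤ ((2 ^ K : ℕ) : ℝ) := by
      have hx : (0 : ℝ) < (n : ℝ) ^ d := by positivity
      calc ((n : ℝ)) ^ d = (2 : ℝ) ^ Real.logb 2 ((n : ℝ) ^ d) :=
            (Real.rpow_logb two_pos (by norm_num) hx).symm
        _ = (2 : ℝ) ^ ((d : ℝ) * Real.logb 2 n) := by rw [Real.logb_pow]
        _ ≤ (2 : ℝ) ^ ((K : ℕ) : ℝ) :=
            Real.rpow_le_rpow_of_exponent_le (by norm_num) (Nat.le_ceil _)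
        _ = ((2 ^ K : ℕ) : ℝ) := by rw [Real.rpow_natCast]; push_cast; ring
    rw [hNdef]
    exact_mod_cast hcast
  -- choice of witnesses
  have hch : ∀ A : Arr n d, ∃ p : ((Fin d → Fin n) × (Fin d → Fin n)),
      A ∉ CRF n d ℓ →
        validPos n d ℓ (fun j => (p.1 j : ℕ)) ∧ validPos n d ℓ (fun j => (p.2 j : ℕ)) ∧
        subEq n d ℓ A (fun j => (p.1 j : ℕ)) (fun j => (p.2 j : ℕ)) ∧
        ∃ j, (p.1 j : ℕ) < p.2 j := by
    intro A
    by_cases hA : A ∈ CRF n d ℓ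
    · exact ⟨⟨fun _ => ⟨0, hn⟩, fun _ => ⟨0, hn⟩⟩, fun hc => absurd hA hc⟩
    · simp only [CRF, Set.mem_setOf_eq] at hA
      push_neg at hA
      obtain ⟨I₁, I₂, hv₁, hv₂, hne, hsub⟩ := hA
      obtain ⟨j, hj⟩ := Function.ne_iff.mp hne
      have hlt : ∀ (I : Fin d → ℕ), validPos n d ℓ I → ∀ j, I j < n := by
        intro I hI j; have h1 := hI j; have h2 := (hℓ j).1; omega
      have hI₁ : (fun j => ((⟨I₁ j, hlt I₁ hv₁ j⟩ : Fin n) : ℕ)) = I₁ := rfl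
      have hI₂ : (fun j => ((⟨I₂ j, hlt I₂ hv₂ j⟩ : Fin n) : ℕ)) = I₂ := rfl
      rcases lt_or_gt_of_ne hj with hlt' | hlt'
      · refine ⟨(fun j => ⟨I₁ j, hlt I₁ hv₁ j⟩, fun j => ⟨I₂ j, hlt I₂ hv₂ j⟩),
          fun _ => ⟨?_, ?_, ?_, ⟨j, ?_⟩⟩⟩ <;>
          simp only [hI₁, hI₂]
        · exact hv₁
        · exact hv₂
        · exact hsub
        · exact hlt'
      · refine ⟨(fun j => ⟨I₂ j, hlt I₂ hv₂ j⟩, fun j => ⟨I₁ j, hlt I₁ hv₁ j⟩),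
          fun _ => ⟨?_, ?_, ?_, ⟨j, ?_⟩⟩⟩ <;>
          simp only [hI₁, hI₂]
        · exact hv₂
        · exact hv₁
        · exact fun a ha => (hsub a ha).symm
        · exact hlt'
  choose ch hP using hch
  set s : Set (Arr n d) := (CRF n d ℓ)ᶜ with hs
  have hsc : Nat.card ↥s = s.toFinset.card := by
    rw [Nat.card_coe_set_eq, Set.ncard_eq_toFinset_card']
  set F := s.toFinset with hFdef
  -- fiber bound
  have hfiber : ∀ p : ((Fin d → Fin n) × (Fin d → Fin n)),
      (F.filter (fun A => ch A = p)).card ≤ 2 ^ (N - L) := by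
    intro p
    rcases Finset.eq_empty_or_nonempty (F.filter (fun A => ch A = p)) with he | ⟨A₀, hA₀⟩
    · simp [he]
    · have hA₀' := Finset.mem_filter.mp hA₀
      have hA₀s : A₀ ∉ CRF n d ℓ := by
        have := Set.mem_toFinset.mp hA₀'.1
        rwa [hs, Set.mem_compl_iff] at this
      have hP₀ := hP A₀ hA₀s
      rw [hA₀'.2] at hP₀
      obtain ⟨hv₁, hv₂, _, j₀, hj₀⟩ := hP₀
      set box : Finset (Fin d → Fin n) :=
        univ.filter (fun x => ∀ j, (p.2 j : ℕ) ≤ x j ∧ (x j : ℕ) < (p.2 j : ℕ) + ℓ j) with hbox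
      have hinj : Set.InjOn (fun (A : Arr n d) => (fun y : ↥(boxᶜ : Finset _) => A ↑y))
          ↑(F.filter (fun A => ch A = p)) := by
        intro A hA B hB hAB
        have hAm := Finset.mem_filter.mp (Finset.mem_coe.mp hA)
        have hBm := Finset.mem_filter.mp (Finset.mem_coe.mp hB)
        have hAcrf : A ∉ CRF n d ℓ := by
          have := Set.mem_toFinset.mp hAm.1; rwa [hs, Set.mem_compl_iff] at this
        have hBcrf : B ∉ CRF n d ℓ := by
          have := Set.mem_toFinset.mp hBm.1; rwa [hs, Set.mem_compl_iff] at this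
        have hPA := hP A hAcrf; rw [hAm.2] at hPA
        have hPB := hP B hBcrf; rw [hBm.2] at hPB
        refine key_inj n d ℓ p.1 p.2 j₀ hj₀ hv₁ A B hPA.2.2.1 hPB.2.2.1 ?_
        intro x hx
        have hxmem : x ∈ (boxᶜ : Finset _) := by
          simp only [Finset.mem_compl, hbox, Finset.mem_filter, Finset.mem_univ, true_and]
          exact hx
        exact congrFun hAB (⟨x, hxmem⟩ : ↥(boxᶜ : Finset _))
      have hle := Finset.card_le_card_of_injOn _
        (fun A _ => Finset.mem_univ ((fun y : ↥(boxᶜ : Finset _) => A ↑y))) hinj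
      have hboxcard : box.card = L := by
        have hpi : box = Fintype.piFinset (fun j =>
            (univ : Finset (Fin n)).filter
              (fun v : Fin n => (p.2 j : ℕ) ≤ (v : ℕ) ∧ (v : ℕ) < (p.2 j : ℕ) + ℓ j)) := by
          ext x
          simp [hbox, Fintype.mem_piFinset]
        rw [hpi, Fintype.card_piFinset]
        rw [hLdef]
        exact Finset.prod_congr rfl (fun j _ => card_filter_interval n _ _ (hv₂ j))
      have htarget : (univ : Finset (↥(boxᶜ : Finset _) → Bool)).card = 2 ^ (N - L) := by
        rw [Finset.card_univ, Fintype.card_fun, Fintype.card_coe, Finset.card_compl,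
          hboxcard]
        congr 1
        · simp [hNdef, Fintype.card_fun]
      calc (F.filter (fun A => ch A = p)).card ≤ _ := hle
        _ = 2 ^ (N - L) := htarget
    -- end fiber
  have hmain : F.card ≤ 2 ^ (N - 1) := by
    have hsplit : F.card =
        ∑ p ∈ (univ : Finset ((Fin d → Fin n) × (Fin d → Fin n))),
          (F.filter (fun A => ch A = p)).card :=
      Finset.card_eq_sum_card_fiberwise (fun A _ => Finset.mem_univ _)
    have hcardprod : Fintype.card ((Fin d → Fin n) × (Fin d → Fin n)) = N * N := by
      simp [hNdef, Fintype.card_fun]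
    calc F.card = _ := hsplit
      _ ≤ ∑ _p ∈ (univ : Finset ((Fin d → Fin n) × (Fin d → Fin n))), 2 ^ (N - L) :=
          Finset.sum_le_sum (fun p _ => hfiber p)
      _ = (N * N) * 2 ^ (N - L) := by
          rw [Finset.sum_const, smul_eq_mul, Finset.card_univ, hcardprod]
      _ ≤ (2 ^ K * 2 ^ K) * 2 ^ (N - L) :=
          Nat.mul_le_mul_right _ (Nat.mul_le_mul hNK hNK)
      _ = 2 ^ (K + K + (N - L)) := by rw [← pow_add, ← pow_add]
      _ ≤ 2 ^ (N - 1) := Nat.pow_le_pow_right (by norm_num) (by omega)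
  constructor
  · calc Nat.card ↥((CRF n d ℓ)ᶜ) = F.card := hsc
      _ ≤ 2 ^ (N - 1) := hmain
  · have htot : Nat.card ↥(CRF n d ℓ) + Nat.card ↥s = 2 ^ N := by
      rw [Nat.card_coe_set_eq, Nat.card_coe_set_eq, hs,
        Set.ncard_add_ncard_compl]
      rw [Nat.card_eq_fintype_card]
      simp [hNdef, Fintype.card_fun]
    have hcompl : Nat.card ↥s ≤ 2 ^ (N - 1) := by rw [hsc]; exact hmain
    have h2 : 2 ^ (N - 1) + 2 ^ (N - 1) = 2 ^ N := by
      rw [← two_mul, ← pow_succ']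
      congr 1
      omega
    omega
end

section
/- Let A : Fin n × Fin n → Σ contain two sub-arrays of size 𝐝 at distinct positions I₁, I₂ whose Hamming distance is k < p (d = 2 case). Then A is uniquely determined by: A restricted outside the box at I₂, the positions I₁ and I₂, and the set of k within-box positions where the two sub-arrays differ. Formally, if A and A' agree outside the I₂-box, both have disagreement set exactly D ⊆ Fin ℓ₁ × Fin ℓ₂ between their I₁- and I₂-sub-arrays, then A = A'. -/
/-- 2D Hamming-distance repeat-free recovery.  If `A` and `A'` agree
outside the size-`(ℓ₁,ℓ₂)` box at `I₂ = (x₂,y₂)`, and both have disagreement set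
exactly `D` (with `|D| = k < p`) between their sub-arrays at `I₁ = (x₁,y₁)` and
`I₂`, then `A = A'`. -/
theorem stmt_14 (n ℓ₁ ℓ₂ p k : ℕ) (x₁ y₁ x₂ y₂ : ℕ)
    (h₁x : x₁ + ℓ₁ ≤ n) (h₁y : y₁ + ℓ₂ ≤ n) (h₂x : x₂ + ℓ₁ ≤ n) (h₂y : y₂ + ℓ₂ ≤ n)
    (hne : (x₁, y₁) ≠ (x₂, y₂))
    (A A' : Fin n × Fin n → Bool)
    (D : Finset (ℕ × ℕ)) (hk : D.card = k) (hkp : k < p)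
    (hDbox : ∀ ab ∈ D, ab.1 < ℓ₁ ∧ ab.2 < ℓ₂)
    (hDA : ∀ a b (ha : a < ℓ₁) (hb : b < ℓ₂),
      ((a, b) ∈ D ↔
        A (⟨x₁ + a, by omega⟩, ⟨y₁ + b, by omega⟩) ≠ A (⟨x₂ + a, by omega⟩, ⟨y₂ + b, by omega⟩)))
    (hDA' : ∀ a b (ha : a < ℓ₁) (hb : b < ℓ₂),
      ((a, b) ∈ D ↔
        A' (⟨x₁ + a, by omega⟩, ⟨y₁ + b, by omega⟩) ≠ A' (⟨x₂ + a, by omega⟩, ⟨y₂ + b, by omega⟩)))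
    (hout : ∀ q : Fin n × Fin n,
      (¬ ∃ a b, a < ℓ₁ ∧ b < ℓ₂ ∧ (q.1 : ℕ) = x₂ + a ∧ (q.2 : ℕ) = y₂ + b) → A q = A' q) :
    A = A' := by

  have hne' : ¬ (x₁ = x₂ ∧ y₁ = y₂) := by simpa [Prod.ext_iff] using hne
  set μ : ℕ → ℕ → ℕ := fun a b =>
    if x₁ < x₂ then a else if x₂ < x₁ then ℓ₁ - a else if y₁ < y₂ then b else ℓ₂ - b with hμdef
  have key : ∀ m a b (_ha : a < ℓ₁) (_hb : b < ℓ₂), μ a b = m →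
      A (⟨x₂ + a, by omega⟩, ⟨y₂ + b, by omega⟩) = A' (⟨x₂ + a, by omega⟩, ⟨y₂ + b, by omega⟩) := by
    intro m
    induction m using Nat.strong_induction_on with
    | _ m ih =>
      intro a b ha hb hm
      have e1 := hDA a b ha hb
      have e2 := hDA' a b ha hb
      have hq1 : A (⟨x₁ + a, by omega⟩, ⟨y₁ + b, by omega⟩)
          = A' (⟨x₁ + a, by omega⟩, ⟨y₁ + b, by omega⟩) := by
        by_cases hin : ∃ a' b', a' < ℓ₁ ∧ b' < ℓ₂ ∧ x₁ + a = x₂ + a' ∧ y₁ + b = y₂ + b'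
        · obtain ⟨a', b', ha', hb', hx, hy⟩ := hin
          have hμlt : μ a' b' < m := by
            subst hm
            simp only [hμdef]
            split_ifs with h1 h2 h3 <;> omega
          have := ih (μ a' b') hμlt a' b' ha' hb' rfl
          have ex : (⟨x₁ + a, by omega⟩ : Fin n) = ⟨x₂ + a', by omega⟩ := Fin.ext hx
          have ey : (⟨y₁ + b, by omega⟩ : Fin n) = ⟨y₂ + b', by omega⟩ := Fin.ext hy
          rw [ex, ey]
          exact this
        · exact hout (⟨x₁ + a, by omega⟩, ⟨y₁ + b, by omega⟩) (by simpa using hin)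
      by_cases hD : (a, b) ∈ D
      · have n1 := e1.mp hD
        have n2 := e2.mp hD
        revert n1 n2 hq1
        cases A (⟨x₂ + a, by omega⟩, ⟨y₂ + b, by omega⟩) <;>
          cases A' (⟨x₂ + a, by omega⟩, ⟨y₂ + b, by omega⟩) <;>
          cases A (⟨x₁ + a, by omega⟩, ⟨y₁ + b, by omega⟩) <;>
          cases A' (⟨x₁ + a, by omega⟩, ⟨y₁ + b, by omega⟩) <;> simp
      · have n1 : ¬ _ := fun h => hD (e1.mpr h)
        have n2 : ¬ _ := fun h => hD (e2.mpr h)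
        simp only [ne_eq, not_not] at n1 n2
        rw [← n1, ← n2, hq1]
  funext q
  by_cases hin : ∃ a b, a < ℓ₁ ∧ b < ℓ₂ ∧ (q.1 : ℕ) = x₂ + a ∧ (q.2 : ℕ) = y₂ + b
  · obtain ⟨a, b, ha, hb, hx, hy⟩ := hin
    have hq : q = (⟨x₂ + a, by omega⟩, ⟨y₂ + b, by omega⟩) := by
      apply Prod.ext <;> [exact Fin.ext hx; exact Fin.ext hy]
    rw [hq]
    exact key (μ a b) a b ha hb rfl
  · exact hout q hin
end

section
/- Existence of repeat-free arrays: for all n ≥ 2, d ≥ 1 and ℓ with ℓ^d > 2d·log₂ n + 1 (and ℓ ≤ n), the set of arrays A : (Fin n)^d → Σ with no two identical ℓ^d sub-arrays at distinct valid positions is nonempty; indeed it has cardinality at least 2^{n^d − 1} > 0. -/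
open Finset

open Classical in
lemma key_count (n d ℓ : ℕ)
    (I₁ I₂ : Fin d → ℕ) (h1 : validPos n d (fun _ => ℓ) I₁)
    (h2 : validPos n d (fun _ => ℓ) I₂)
    (j : Fin d) (hj : I₁ j < I₂ j) :
    (univ.filter (fun A : Arr n d => subEq n d (fun _ => ℓ) A I₁ I₂)).card
      ≤ 2 ^ (n ^ d - ℓ ^ d) := by
  have hbox : ∀ (a : Fin d → Fin ℓ) (j' : Fin d), I₂ j' + (a j' : ℕ) < n := by
    intro a j'
    have hh : I₂ j' + ℓ ≤ n := h2 j'; have := (a j').2; omega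
  set emb : (Fin d → Fin ℓ) → (Fin d → Fin n) :=
    fun a j' => ⟨I₂ j' + a j', hbox a j'⟩ with hemb
  have hembinj : Function.Injective emb := by
    intro a b hab
    funext j'
    have := congrFun hab j'
    simp only [hemb, Fin.mk.injEq] at this
    exact Fin.ext (by omega)
  set B : Finset (Fin d → Fin n) := image emb univ with hB
  have hBcard : B.card = ℓ ^ d := by
    rw [hB, card_image_of_injective _ hembinj, card_univ]
    simp [Fintype.card_fun]
  have hinj : Set.InjOn (fun (A : Arr n d) => (fun x : {x : Fin d → Fin n // x ∈ Bᶜ} => A x.1))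
      ((univ.filter (fun A : Arr n d => subEq n d (fun _ => ℓ) A I₁ I₂)) : Finset (Arr n d)) := by
    intro A hA A' hA' hFF
    simp only [coe_filter, Set.mem_setOf_eq, mem_univ, true_and] at hA hA'
    have main : ∀ m : ℕ, ∀ x : Fin d → Fin n, (x j : ℕ) = m → A x = A' x := by
      intro m
      induction m using Nat.strong_induction_on with
      | _ m ih =>
        intro x hx
        by_cases hxB : x ∈ B
        · rw [hB, mem_image] at hxB
          obtain ⟨a, -, rfl⟩ := hxB
          have ha : ∀ j', (fun j'' => (a j'' : ℕ)) j' < (fun _ : Fin d => ℓ) j' :=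
            fun j' => (a j').2
          have hin2 : ∀ j', (fun j'' => I₂ j'' + (a j'' : ℕ)) j' < n := fun j' => hbox a j'
          have hin1 : ∀ j', (fun j'' => I₁ j'' + (a j'' : ℕ)) j' < n := by
            intro j'; have hh : I₁ j' + ℓ ≤ n := h1 j'; have := (a j').2; simp only; omega
          set y : Fin d → Fin n := fun j' => ⟨I₁ j' + a j', hin1 j'⟩ with hy
          have eA2 : extA n d A (fun j' => I₂ j' + (a j' : ℕ)) = A (emb a) := by
            rw [extA, dif_pos hin2]
          have eA1 : extA n d A (fun j' => I₁ j' + (a j' : ℕ)) = A y := by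
            rw [extA, dif_pos hin1]
          have eA2' : extA n d A' (fun j' => I₂ j' + (a j' : ℕ)) = A' (emb a) := by
            rw [extA, dif_pos hin2]
          have eA1' : extA n d A' (fun j' => I₁ j' + (a j' : ℕ)) = A' y := by
            rw [extA, dif_pos hin1]
          have e1 := hA _ ha
          have e2 := hA' _ ha
          have hyj : (y j : ℕ) < m := by
            have : (emb a j : ℕ) = m := hx
            simp only [hy, hemb] at this ⊢
            omega
          have hyy := ih _ hyj y rfl
          calc A (emb a) = A y := by rw [← eA2, ← e1, eA1]
            _ = A' y := hyy
            _ = A' (emb a) := by rw [← eA1', e2, eA2']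
        · have hxc : x ∈ Bᶜ := by simpa using hxB
          exact congrFun hFF ⟨x, hxc⟩
    funext x
    exact main _ x rfl
  calc (univ.filter (fun A : Arr n d => subEq n d (fun _ => ℓ) A I₁ I₂)).card
      ≤ (univ : Finset ({x : Fin d → Fin n // x ∈ Bᶜ} → Bool)).card :=
        Finset.card_le_card_of_injOn _ (fun _ _ => mem_univ _) hinj
    _ = 2 ^ (n ^ d - ℓ ^ d) := by
        rw [card_univ, Fintype.card_fun, Fintype.card_coe, card_compl, hBcard]
        simp [Fintype.card_fun]

lemma subEq_symm {n d : ℕ} {ℓ : Fin d → ℕ} {A : Arr n d} {I₁ I₂ : Fin d → ℕ}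
    (h : subEq n d ℓ A I₁ I₂) : subEq n d ℓ A I₂ I₁ :=
  fun a ha => (h a ha).symm

/-- existence of repeat-free arrays.  For `n ≥ 2`, `d ≥ 1`, `ℓ ≤ n`
with `ℓ^d > 2d·log₂ n + 1`, the set of arrays with no two identical `ℓ^d`
sub-arrays at distinct valid positions has cardinality at least `2^{n^d − 1} > 0`,
and in particular is nonempty. -/
theorem stmt_17 (n d ℓ : ℕ) (hn : 2 ≤ n) (hd : 1 ≤ d) (hℓn : ℓ ≤ n)
    (h : 2 * (d : ℝ) * Real.logb 2 n + 1 < (ℓ : ℝ) ^ d) :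
    2 ^ (n ^ d - 1) ≤ Nat.card ↥(CRF n d (fun _ => ℓ)) ∧
      (CRF n d (fun _ => ℓ)).Nonempty := by
  classical
  -- basic facts
  have hlogb : (1:ℝ) ≤ Real.logb 2 n := by
    rw [show (1:ℝ) = Real.logb 2 2 by simp]
    apply Real.logb_le_logb_of_le (by norm_num : (1:ℝ) < 2) (by norm_num)
    exact_mod_cast hn
  have hd' : (1:ℝ) ≤ (d:ℝ) := by exact_mod_cast hd
  have hℓd3 : (3:ℝ) ≤ (ℓ:ℝ) ^ d := by nlinarith
  have hℓ2 : 2 ≤ ℓ := by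
    by_contra hc
    push_neg at hc
    interval_cases ℓ
    · rw [Nat.cast_zero, zero_pow (by omega : d ≠ 0)] at hℓd3; linarith
    · rw [Nat.cast_one, one_pow] at hℓd3; linarith
  have hℓ1 : 1 ≤ ℓ := by omega
  have hℓdn : ℓ ^ d ≤ n ^ d := Nat.pow_le_pow_left hℓn d
  have hℓd1 : 1 ≤ ℓ ^ d := Nat.one_le_pow _ _ (by omega)
  have hnd1 : 1 ≤ n ^ d := Nat.one_le_pow _ _ (by omega)
  -- main numeric inequality: n^(2d) ≤ 2^(ℓ^d - 1)
  have hnum : n ^ (2 * d) ≤ 2 ^ (ℓ ^ d - 1) := by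
    have hnpos : (0:ℝ) < n := by positivity
    have e1 : ((n : ℝ)) = (2:ℝ) ^ (Real.logb 2 n) := by
      rw [Real.rpow_logb (by norm_num) (by norm_num) hnpos]
    have e2 : (2:ℝ) ^ (Real.logb 2 n * ((2 * d : ℕ) : ℝ)) = ((n:ℝ)) ^ (2 * d) := by
      rw [Real.rpow_mul (by norm_num), Real.rpow_logb (by norm_num) (by norm_num) hnpos,
        Real.rpow_natCast]
    have hexp : Real.logb 2 n * ((2 * d : ℕ) : ℝ) ≤ ((ℓ ^ d - 1 : ℕ) : ℝ) := by
      have hc1 : ((ℓ ^ d - 1 : ℕ) : ℝ) = (ℓ:ℝ) ^ d - 1 := by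
        push_cast [Nat.cast_sub hℓd1]
        ring
      rw [hc1]
      push_cast
      nlinarith
    have e3 : ((n:ℝ)) ^ (2 * d) ≤ (2:ℝ) ^ ((ℓ ^ d - 1 : ℕ) : ℝ) := by
      rw [← e2]
      exact Real.rpow_le_rpow_of_exponent_le (by norm_num) hexp
    rw [Real.rpow_natCast] at e3
    exact_mod_cast e3
  -- Finset setup
  set ℓv : Fin d → ℕ := fun _ => ℓ with hℓv
  set S : Set (Arr n d) := CRF n d ℓv with hS
  set good : Finset (Arr n d) := S.toFinset with hgood
  have hcard_eq : Nat.card ↥S = good.card := by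
    rw [Nat.card_eq_fintype_card, hgood, Set.toFinset_card]
  -- pairs and cover
  set pairs : Finset ((Fin d → Fin n) × (Fin d → Fin n)) :=
    univ.filter (fun pq => validPos n d ℓv (fun j => (pq.1 j : ℕ)) ∧
      validPos n d ℓv (fun j => (pq.2 j : ℕ)) ∧ ∃ j, pq.1 j < pq.2 j) with hpairs
  set T : ((Fin d → Fin n) × (Fin d → Fin n)) → Finset (Arr n d) :=
    fun pq => univ.filter
      (fun A : Arr n d => subEq n d ℓv A (fun j => (pq.1 j : ℕ)) (fun j => (pq.2 j : ℕ))) with hT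
  have hcover : goodᶜ ⊆ pairs.biUnion T := by
    intro A hA
    rw [mem_compl, hgood, Set.mem_toFinset, hS] at hA
    rw [CRF, Set.mem_setOf_eq] at hA
    push_neg at hA
    obtain ⟨I₁, I₂, hv1, hv2, hne, hsub⟩ := hA
    have hIlt : ∀ (I : Fin d → ℕ), validPos n d ℓv I → ∀ j, I j < n := by
      intro I hv j
      have : I j + ℓ ≤ n := hv j
      omega
    set p : Fin d → Fin n := fun j => ⟨I₁ j, hIlt I₁ hv1 j⟩ with hp
    set q : Fin d → Fin n := fun j => ⟨I₂ j, hIlt I₂ hv2 j⟩ with hq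
    have hpI : (fun j => ((p j : ℕ))) = I₁ := rfl
    have hqI : (fun j => ((q j : ℕ))) = I₂ := rfl
    have hnej : ∃ j, I₁ j ≠ I₂ j := by
      by_contra hc
      push_neg at hc
      exact hne (funext hc)
    obtain ⟨j, hj⟩ := hnej
    rcases lt_or_gt_of_ne hj with hlt | hgt
    · refine mem_biUnion.mpr ⟨(p, q), ?_, ?_⟩
      · rw [hpairs, mem_filter]
        refine ⟨mem_univ _, ?_, ?_, ⟨j, ?_⟩⟩
        · rw [hpI]; exact hv1
        · rw [hqI]; exact hv2
        · exact hlt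
      · rw [hT, mem_filter]
        exact ⟨mem_univ _, by rw [hpI, hqI]; exact hsub⟩
    · refine mem_biUnion.mpr ⟨(q, p), ?_, ?_⟩
      · rw [hpairs, mem_filter]
        refine ⟨mem_univ _, ?_, ?_, ⟨j, ?_⟩⟩
        · rw [hqI]; exact hv2
        · rw [hpI]; exact hv1
        · exact hgt
      · rw [hT, mem_filter]
        exact ⟨mem_univ _, by rw [hpI, hqI]; exact subEq_symm hsub⟩
  -- cardinality of bad set
  have hTbound : ∀ pq ∈ pairs, (T pq).card ≤ 2 ^ (n ^ d - ℓ ^ d) := by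
    intro pq hpq
    rw [hpairs, mem_filter] at hpq
    obtain ⟨-, hv1, hv2, j, hj⟩ := hpq
    exact key_count n d ℓ _ _ hv1 hv2 j (by exact_mod_cast hj)
  have hpairscard : pairs.card ≤ n ^ (2 * d) := by
    calc pairs.card ≤ (univ : Finset ((Fin d → Fin n) × (Fin d → Fin n))).card :=
        card_le_card (filter_subset _ _)
      _ = n ^ (2 * d) := by
        rw [card_univ]
        simp [Fintype.card_fun, two_mul, pow_add]
  have hbad : goodᶜ.card ≤ 2 ^ (n ^ d - 1) := by
    calc goodᶜ.card ≤ (pairs.biUnion T).card := card_le_card hcover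
      _ ≤ ∑ pq ∈ pairs, (T pq).card := card_biUnion_le
      _ ≤ pairs.card * 2 ^ (n ^ d - ℓ ^ d) := sum_le_card_nsmul _ _ _ hTbound
      _ ≤ n ^ (2 * d) * 2 ^ (n ^ d - ℓ ^ d) := Nat.mul_le_mul_right _ hpairscard
      _ ≤ 2 ^ (ℓ ^ d - 1) * 2 ^ (n ^ d - ℓ ^ d) := Nat.mul_le_mul_right _ hnum
      _ = 2 ^ (n ^ d - 1) := by
        rw [← pow_add]
        congr 1
        omega
  have htotal : good.card + goodᶜ.card = 2 ^ (n ^ d) := by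
    rw [card_add_card_compl]
    simp [Fintype.card_fun]
  have hgoodcard : 2 ^ (n ^ d - 1) ≤ good.card := by
    have h2 : 2 ^ (n ^ d) = 2 ^ (n ^ d - 1) + 2 ^ (n ^ d - 1) := by
      rw [← two_mul, ← pow_succ']
      congr 1
      omega
    omega
  constructor
  · rw [hcard_eq]; exact hgoodcard
  · have : good.Nonempty := card_pos.mp (lt_of_lt_of_le (by positivity) hgoodcard)
    obtain ⟨A, hA⟩ := this
    exact ⟨A, by rwa [hgood, Set.mem_toFinset] at hA⟩
end
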